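/- arXiv:2202.09058 — 8 statements merged into one kernel-verified Lean document; each statement's English description precedes it below -/
import Mathlib

section
/- For any continuously differentiable f: R^{n×p} → R and any X ∈ R^{n×p}, the matrices ψ(X)X and X(XᵀX − I_p) are orthogonal with respect to the Frobenius inner product, i.e., tr((ψ(X)X)ᵀ X(XᵀX − I_p)) = 0, where ψ(X) = ∇f(X)Xᵀ − X∇f(X)ᵀ. -/
/-!
The identity is purely algebraic. Since `ψ = G Xᵀ - X Gᵀ` is skew-symmetric, so is its
congruence `Xᵀ ψᵀ X`, and the inner product in question is `tr((Xᵀ ψᵀ X)(XᵀX - 1))`: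
the trace of a skew-symmetric matrix times the symmetric matrix `XᵀX - 1`, hence zero.
-/

open Matrix

attribute [local instance] Matrix.frobeniusNormedAddCommGroup Matrix.frobeniusNormedSpace

namespace Matrix

variable {m n R : Type*} [CommRing R]

theorem transpose_sub_transpose_self (A : Matrix n n R) : (A - Aᵀ)ᵀ = -(A - Aᵀ) := by
  rw [transpose_sub, transpose_transpose, neg_sub]

theorem transpose_mul_mul_of_transpose_eq_neg [Fintype n] {M : Matrix n n R} (hM : Mᵀ = -M)
    (B : Matrix n m R) : (Bᵀ * M * B)ᵀ = -(Bᵀ * M * B) := by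
  rw [transpose_mul, transpose_mul, transpose_transpose, hM, Matrix.neg_mul, Matrix.mul_neg,
    Matrix.mul_assoc]

theorem trace_mul_eq_zero_of_transpose_eq_neg_of_isSymm [Fintype n] [IsAddTorsionFree R]
    {M S : Matrix n n R} (hM : Mᵀ = -M) (hS : S.IsSymm) : (M * S).trace = 0 := by
  rw [← self_eq_neg]
  calc (M * S).trace = (Sᵀ * Mᵀ).trace := by rw [← transpose_mul, trace_transpose]
    _ = -(M * S).trace := by rw [hS.eq, hM, Matrix.mul_neg, trace_neg, trace_mul_comm]

end Matrix

theorem relative_gradient_orthogonal_to_normal_general (n p : ℕ)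
    (X G : Matrix (Fin n) (Fin p) ℝ) :
    (((G * Xᵀ - X * Gᵀ) * X)ᵀ * (X * (Xᵀ * X - 1))).trace = 0 := by
  have hψ : (G * Xᵀ - X * Gᵀ)ᵀ = -(G * Xᵀ - X * Gᵀ) := by
    simpa only [transpose_mul, transpose_transpose] using transpose_sub_transpose_self (G * Xᵀ)
  have hS : (Xᵀ * X - 1).IsSymm := by
    simp only [IsSymm, transpose_sub, transpose_mul, transpose_transpose, transpose_one]
  rw [transpose_mul, ← Matrix.mul_assoc]
  exact trace_mul_eq_zero_of_transpose_eq_neg_of_isSymm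
    (transpose_mul_mul_of_transpose_eq_neg (by rw [transpose_transpose, hψ, neg_neg]) X) hS

/-- For a continuously differentiable `f` with Euclidean gradient `G = ∇f(X)` at `X`
(characterized via the Frobenius inner product), the matrices `ψ(X)X` and
`X(XᵀX − I_p)` are Frobenius-orthogonal, where `ψ(X) = ∇f(X)Xᵀ − X∇f(X)ᵀ`. -/
theorem relative_gradient_orthogonal_to_normal (n p : ℕ)
    (f : Matrix (Fin n) (Fin p) ℝ → ℝ) (hf : ContDiff ℝ 1 f)
    (X G : Matrix (Fin n) (Fin p) ℝ)
    (hG : ∀ ξ : Matrix (Fin n) (Fin p) ℝ, fderiv ℝ f X ξ = (Gᵀ * ξ).trace) :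
    (((G * Xᵀ - X * Gᵀ) * X)ᵀ * (X * (Xᵀ * X - 1))).trace = 0 :=
  relative_gradient_orthogonal_to_normal_general n p X G
end

section
/- Let Y ∈ R^{n×p} have full column rank. For every matrix ξ ∈ R^{n×p} satisfying ξᵀY + Yᵀξ = 0, there exists a skew-symmetric matrix W ∈ R^{n×n} such that ξ = WY. -/
open Matrix

variable {R m n : Type*} [CommRing R] [Fintype m] [Fintype n] [DecidableEq n]

lemma transpose_mul_nonsing_inv_transpose_mul_self_mul {Y : Matrix m n R}
    (hY : IsUnit (Yᵀ * Y)) : (Y * (Yᵀ * Y)⁻¹)ᵀ * Y = 1 := by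
  have hsymm : (Yᵀ * Y)ᵀ = Yᵀ * Y := by rw [transpose_mul, transpose_transpose]
  rw [transpose_mul, transpose_nonsing_inv, hsymm, Matrix.mul_assoc,
    nonsing_inv_mul _ ((isUnit_iff_isUnit_det _).mp hY)]

/- With `Pᵀ Y = 1`, the witness is `ξ Pᵀ - P ξᵀ + P (ξᵀ Y) Pᵀ`: on `Y` its first two terms give
`ξ - P (ξᵀ Y)`, which the last one corrects, and it is skew because `ξᵀ Y` is. -/
lemma exists_skew_mul_eq_of_transpose_mul_eq_one {Y ξ P : Matrix m n R} (hP : Pᵀ * Y = 1)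
    (hξ : ξᵀ * Y + Yᵀ * ξ = 0) : ∃ W : Matrix m m R, Wᵀ = -W ∧ ξ = W * Y := by
  have hskew : ξᵀ * Y = -(Yᵀ * ξ) := eq_neg_of_add_eq_zero_left hξ
  refine ⟨ξ * Pᵀ - P * ξᵀ + P * (ξᵀ * Y) * Pᵀ, ?_, ?_⟩
  · simp only [transpose_add, transpose_sub, transpose_mul, transpose_transpose, transpose_neg, hskew,
      Matrix.mul_neg, Matrix.neg_mul, Matrix.mul_assoc]
    abel
  · simp only [Matrix.add_mul, Matrix.sub_mul, Matrix.mul_assoc, hP, Matrix.mul_one]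
    abel

/-- If `Y ∈ ℝ^{n×p}` has full column rank (`YᵀY` invertible), then every tangent
vector `ξ` (i.e. `ξᵀY + Yᵀξ = 0`) can be written as `ξ = WY` for some
skew-symmetric `W ∈ ℝ^{n×n}`. -/
theorem tangent_eq_skew_mul (n p : ℕ) (Y : Matrix (Fin n) (Fin p) ℝ)
    (hY : IsUnit (Yᵀ * Y)) (ξ : Matrix (Fin n) (Fin p) ℝ)
    (hξ : ξᵀ * Y + Yᵀ * ξ = 0) :
    ∃ W : Matrix (Fin n) (Fin n) ℝ, Wᵀ = -W ∧ ξ = W * Y :=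
  exists_skew_mul_eq_of_transpose_mul_eq_one
    (transpose_mul_nonsing_inv_transpose_mul_self_mul hY) hξ
end

section
/- Let Y ∈ R^{n×p} have full column rank. For every symmetric S ∈ R^{p×p} and every skew-symmetric W ∈ R^{n×n}, it holds that ⟨WY, (I_n − (1/2)·Y(YᵀY)^{-1}Yᵀ)·Y(YᵀY)^{-1}·S·(YᵀY)^{-1}⟩ = 0, where ⟨A,B⟩ = tr(AᵀB). -/
/-!
With `P = Y(YᵀY)⁻¹Yᵀ` we have `P · Y(YᵀY)⁻¹ = Y(YᵀY)⁻¹`, because `A⁻¹AA⁻¹ = A⁻¹` holds for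
Mathlib's inverse of every square matrix, singular ones included. So the metric factor `I − ½P`
acts on the normal vector as multiplication by `½`, and the pairing becomes
`½ tr((YᵀWᵀY) · ((YᵀY)⁻¹S(YᵀY)⁻¹))`: the trace of a skew-symmetric times a symmetric matrix,
which is zero.
-/

open Matrix

namespace Matrix

theorem trace_mul_eq_zero_of_transpose_eq_neg {n R : Type*} [Fintype n] [CommRing R]
    [NoZeroDivisors R] [CharZero R] {A B : Matrix n n R} (hA : Aᵀ = -A) (hB : B.IsSymm) :
    (A * B).trace = 0 := by
  refine CharZero.neg_eq_self_iff.mp ?_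
  calc -(A * B).trace = (B * Aᵀ).trace := by rw [hA, mul_neg, trace_neg, trace_mul_comm]
    _ = (A * B).trace := by rw [← trace_transpose, transpose_mul, transpose_transpose, hB.eq]

theorem transpose_mul_mul_transpose_eq_neg {m n R : Type*} [Fintype m] [CommRing R]
    {W : Matrix m m R} (hW : Wᵀ = -W) (B : Matrix m n R) : (Bᵀ * W * B)ᵀ = -(Bᵀ * W * B) := by
  rw [transpose_mul, transpose_mul, transpose_transpose, hW, Matrix.neg_mul, Matrix.mul_neg,
    Matrix.mul_assoc]

theorem IsSymm.transpose_mul_mul {m n R : Type*} [Fintype m] [CommSemiring R]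
    {S : Matrix m m R} (hS : S.IsSymm) (B : Matrix m n R) : (Bᵀ * S * B).IsSymm := by
  rw [IsSymm, transpose_mul, transpose_mul, transpose_transpose, hS.eq, Matrix.mul_assoc]

variable {m n R : Type*} [Fintype m] [Fintype n] [DecidableEq n] [CommRing R]

theorem nonsing_inv_mul_self_mul_nonsing_inv (A : Matrix n n R) : A⁻¹ * A * A⁻¹ = A⁻¹ := by
  by_cases h : IsUnit A.det
  · rw [nonsing_inv_mul A h, Matrix.one_mul]
  · rw [nonsing_inv_apply_not_isUnit A h, Matrix.mul_zero]

theorem isSymm_nonsing_inv_transpose_mul_self (Y : Matrix m n R) : (Yᵀ * Y)⁻¹.IsSymm := by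
  rw [IsSymm, transpose_nonsing_inv, transpose_mul, transpose_transpose]

theorem mul_nonsing_inv_transpose_mul_self_mul_transpose_mul_mul {k : Type*}
    (Y : Matrix m n R) (X : Matrix n k R) :
    Y * (Yᵀ * Y)⁻¹ * Yᵀ * (Y * (Yᵀ * Y)⁻¹ * X) = Y * (Yᵀ * Y)⁻¹ * X := by
  calc Y * (Yᵀ * Y)⁻¹ * Yᵀ * (Y * (Yᵀ * Y)⁻¹ * X)
      = Y * ((Yᵀ * Y)⁻¹ * (Yᵀ * Y) * (Yᵀ * Y)⁻¹) * X := by simp only [Matrix.mul_assoc]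
    _ = Y * (Yᵀ * Y)⁻¹ * X := by rw [nonsing_inv_mul_self_mul_nonsing_inv]

end Matrix

theorem normal_orthogonal_to_tangent_general (n p : ℕ) (Y : Matrix (Fin n) (Fin p) ℝ)
    (S : Matrix (Fin p) (Fin p) ℝ) (hS : Sᵀ = S)
    (W : Matrix (Fin n) (Fin n) ℝ) (hW : Wᵀ = -W) :
    ((W * Y)ᵀ *
      ((1 - (1/2 : ℝ) • (Y * (Yᵀ * Y)⁻¹ * Yᵀ)) *
        (Y * (Yᵀ * Y)⁻¹ * S * (Yᵀ * Y)⁻¹))).trace = 0 := by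
  have hnormal : (1 - (1/2 : ℝ) • (Y * (Yᵀ * Y)⁻¹ * Yᵀ)) * (Y * (Yᵀ * Y)⁻¹ * S * (Yᵀ * Y)⁻¹)
      = (1/2 : ℝ) • (Y * (Yᵀ * Y)⁻¹ * (S * (Yᵀ * Y)⁻¹)) := by
    rw [Matrix.sub_mul, Matrix.one_mul, Matrix.smul_mul, Matrix.mul_assoc _ S,
      mul_nonsing_inv_transpose_mul_self_mul_transpose_mul_mul]
    module
  have hsplit : (W * Y)ᵀ * (Y * (Yᵀ * Y)⁻¹ * (S * (Yᵀ * Y)⁻¹))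
      = (Yᵀ * Wᵀ * Y) * ((Yᵀ * Y)⁻¹ᵀ * S * (Yᵀ * Y)⁻¹) := by
    rw [transpose_mul, (isSymm_nonsing_inv_transpose_mul_self Y).eq]
    simp only [Matrix.mul_assoc]
  rw [hnormal, Matrix.mul_smul, hsplit, trace_smul,
    trace_mul_eq_zero_of_transpose_eq_neg
      (transpose_mul_mul_transpose_eq_neg (by rw [transpose_transpose, hW, neg_neg]) Y)
      (IsSymm.transpose_mul_mul hS _), smul_zero]

/-- For `Y` of full column rank, every tangent vector `WY` (`W` skew-symmetric) is
orthogonal, with respect to the generalized canonical metric, to every normal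
vector `Y(YᵀY)⁻¹S` (`S` symmetric):
`⟨WY, (I − (1/2)Y(YᵀY)⁻¹Yᵀ)·Y(YᵀY)⁻¹S(YᵀY)⁻¹⟩_F = 0`. -/
theorem normal_orthogonal_to_tangent (n p : ℕ) (Y : Matrix (Fin n) (Fin p) ℝ)
    (hY : IsUnit (Yᵀ * Y)) (S : Matrix (Fin p) (Fin p) ℝ) (hS : Sᵀ = S)
    (W : Matrix (Fin n) (Fin n) ℝ) (hW : Wᵀ = -W) :
    ((W * Y)ᵀ *
      ((1 - (1/2 : ℝ) • (Y * (Yᵀ * Y)⁻¹ * Yᵀ)) *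
        (Y * (Yᵀ * Y)⁻¹ * S * (Yᵀ * Y)⁻¹))).trace = 0 :=
  normal_orthogonal_to_tangent_general n p Y S hS W hW
end

section
/- Let X ∈ R^{n×p} have full column rank and let f: R^{n×p} → R be differentiable. Then for every skew-symmetric W ∈ R^{n×n}, g_X(ψ(X)X, WX) = ⟨∇f(X), WX⟩, where g_X(ξ,ζ) = ⟨ξ, (I_n − (1/2)X(XᵀX)^{-1}Xᵀ)ζ(XᵀX)^{-1}⟩ and ψ(X) = ∇f(X)Xᵀ − X∇f(X)ᵀ. -/
/-!
Write `P = X (XᵀX)⁻¹ Xᵀ`, the orthogonal projector onto the column space of `X`, and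
`ψ = N - Nᵀ` with `N = G Xᵀ`. By cyclicity of the trace the left-hand side is
`tr (ψᵀ W P) - ½ tr (ψᵀ P W P)`. Since `P X = X`, the first term is
`tr (Gᵀ W X) - tr (N W P)`; since `P W P` is skew-symmetric and `Xᵀ P = Xᵀ`, the second
trace is `-2 tr (N W P)`, and the two copies of `tr (N W P)` cancel.
-/

open Matrix

namespace Matrix

variable {m n R : Type*} [Fintype m] [Fintype n] [CommRing R]

theorem trace_transpose_mul_of_transpose_eq_neg (N S : Matrix m m R) (hS : Sᵀ = -S) :
    (Nᵀ * S).trace = -(N * S).trace := by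
  rw [← trace_transpose, transpose_mul, transpose_transpose, hS, neg_mul, trace_neg,
    trace_mul_comm]

theorem transpose_mul_self_inv_transpose [DecidableEq n] (X : Matrix m n R) :
    (Xᵀ * X)⁻¹ᵀ = (Xᵀ * X)⁻¹ := by
  rw [transpose_nonsing_inv, transpose_mul, transpose_transpose]

theorem mul_transpose_mul_self_inv_mul_transpose_mul_self [DecidableEq n] (X : Matrix m n R)
    (hX : IsUnit (Xᵀ * X)) : X * (Xᵀ * X)⁻¹ * Xᵀ * X = X := by
  rw [Matrix.mul_assoc _ Xᵀ, Matrix.mul_assoc,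
    nonsing_inv_mul _ ((isUnit_iff_isUnit_det _).mp hX), Matrix.mul_one]

theorem trace_transpose_mul_mul_cycle (ψ : Matrix m m R) (X K : Matrix m n R)
    (B : Matrix n n R) :
    ((ψ * X)ᵀ * (K * B)).trace = (ψᵀ * (K * B * Xᵀ)).trace := by
  rw [transpose_mul, Matrix.mul_assoc, trace_mul_comm]
  simp only [Matrix.mul_assoc]

variable (G X : Matrix m n R) {W P : Matrix m m R}

theorem trace_transpose_sub_mul_mul_of_mul_eq (hPX : P * X = X) :
    ((G * Xᵀ - X * Gᵀ)ᵀ * W * P).trace = (Gᵀ * W * X).trace - (G * Xᵀ * W * P).trace := by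
  have hcycle : (X * Gᵀ * W * P).trace = (Gᵀ * W * X).trace := by
    rw [Matrix.mul_assoc, Matrix.mul_assoc, trace_mul_comm, Matrix.mul_assoc, Matrix.mul_assoc,
      hPX, Matrix.mul_assoc]
  rw [transpose_sub, transpose_mul, transpose_mul, transpose_transpose, transpose_transpose,
    Matrix.sub_mul, Matrix.sub_mul, trace_sub, hcycle]

theorem trace_transpose_sub_mul_mul_mul_of_transpose_eq_neg (hW : Wᵀ = -W) (hP : Pᵀ = P)
    (hPX : P * X = X) :
    ((G * Xᵀ - X * Gᵀ)ᵀ * P * W * P).trace = -2 * (G * Xᵀ * W * P).trace := by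
  have hskew : (P * W * P)ᵀ = -(P * W * P) := by
    rw [transpose_mul, transpose_mul, hP, hW]
    simp only [Matrix.neg_mul, Matrix.mul_neg, Matrix.mul_assoc]
  have hXP : Xᵀ * P = Xᵀ := by rw [← hP, ← transpose_mul, hPX]
  have hsub : (G * Xᵀ - X * Gᵀ)ᵀ = (G * Xᵀ)ᵀ - G * Xᵀ := by
    rw [transpose_sub, transpose_mul, transpose_transpose, transpose_mul, transpose_transpose]
  have hNS : (G * Xᵀ * (P * W * P)).trace = (G * Xᵀ * W * P).trace := by
    rw [← Matrix.mul_assoc, ← Matrix.mul_assoc, Matrix.mul_assoc G, hXP]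
  rw [Matrix.mul_assoc _ P, Matrix.mul_assoc, hsub, Matrix.sub_mul,
    trace_sub, trace_transpose_mul_of_transpose_eq_neg _ _ hskew, hNS]
  ring

end Matrix

theorem riemannian_gradient_canonical_general (n p : ℕ)
    (X G : Matrix (Fin n) (Fin p) ℝ) (hX : IsUnit (Xᵀ * X))
    (W : Matrix (Fin n) (Fin n) ℝ) (hW : Wᵀ = -W) :
    (((G * Xᵀ - X * Gᵀ) * X)ᵀ *
      ((1 - (1/2 : ℝ) • (X * (Xᵀ * X)⁻¹ * Xᵀ)) * (W * X) * (Xᵀ * X)⁻¹)).trace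
      = (Gᵀ * (W * X)).trace := by
  set P := X * (Xᵀ * X)⁻¹ * Xᵀ
  have hP : Pᵀ = P := by
    simp only [P, transpose_mul, transpose_transpose, transpose_mul_self_inv_transpose,
      Matrix.mul_assoc]
  have hPX : P * X = X := mul_transpose_mul_self_inv_mul_transpose_mul_self X hX
  have hproj : (1 - (1/2 : ℝ) • P) * (W * X) * (Xᵀ * X)⁻¹ * Xᵀ
      = (1 - (1/2 : ℝ) • P) * W * P := by
    simp only [P, Matrix.mul_assoc]
  rw [trace_transpose_mul_mul_cycle, hproj]
  simp only [Matrix.mul_sub, Matrix.sub_mul, Matrix.mul_smul, Matrix.smul_mul, Matrix.mul_one,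
    trace_sub, trace_smul, smul_eq_mul, ← Matrix.mul_assoc]
  rw [trace_transpose_sub_mul_mul_of_mul_eq G X hPX,
    trace_transpose_sub_mul_mul_mul_of_transpose_eq_neg G X hW hP hPX]
  ring

/-- For `X` of full column rank and `f` differentiable with Euclidean gradient
`G = ∇f(X)` at `X`, for every skew-symmetric `W`:
`g_X(ψ(X)X, WX) = ⟨∇f(X), WX⟩_F`, where
`g_X(ξ,ζ) = ⟨ξ, (I − (1/2)X(XᵀX)⁻¹Xᵀ)ζ(XᵀX)⁻¹⟩_F` and
`ψ(X) = ∇f(X)Xᵀ − X∇f(X)ᵀ`. -/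
theorem riemannian_gradient_canonical (n p : ℕ)
    (f : Matrix (Fin n) (Fin p) ℝ → ℝ) (hf : Differentiable ℝ f)
    (X G : Matrix (Fin n) (Fin p) ℝ) (hX : IsUnit (Xᵀ * X))
    (hG : ∀ ξ : Matrix (Fin n) (Fin p) ℝ, fderiv ℝ f X ξ = (Gᵀ * ξ).trace)
    (W : Matrix (Fin n) (Fin n) ℝ) (hW : Wᵀ = -W) :
    (((G * Xᵀ - X * Gᵀ) * X)ᵀ *
      ((1 - (1/2 : ℝ) • (X * (Xᵀ * X)⁻¹ * Xᵀ)) * (W * X) * (Xᵀ * X)⁻¹)).trace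
      = (Gᵀ * (W * X)).trace :=
  riemannian_gradient_canonical_general n p X G hX W hW
end

section
/- If X: [0,T) → R^{n×p} is differentiable and satisfies Ẋ(t) = −ψ(X(t))X(t) − λX(t)(X(t)ᵀX(t) − I_p) with λ > 0, then d/dt N(X(t)) = −λ‖X(t)(X(t)ᵀX(t) − I_p)‖_F² ≤ 0, where N(X) = (1/4)‖XᵀX − I_p‖_F². -/
open Matrix

attribute [local instance] Matrix.frobeniusNormedAddCommGroup Matrix.frobeniusNormedSpace

/-! With `E = XᵀX - 1` and `S = XᵀX`, the derivative of `N = ¼ tr(EᵀE)` is `½ tr(E Ė)` where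
`Ė = ẊᵀX + XᵀẊ`. Since `ψ` is skew-symmetric, the term `ψX` of the velocity contributes
`Xᵀ(ψᵀ + ψ)X = 0` to `Ė`, leaving `Ė = -λ(ES + SE)`; and `tr(E(ES + SE)) = 2 tr(ESE) = 2‖XE‖²`. -/

namespace Matrix

variable {m n R : Type*} [CommRing R]

theorem transpose_mul_add_transpose_mul_of_transpose_eq_neg [Fintype m] {Ψ : Matrix m m R}
    (hΨ : Ψᵀ = -Ψ) (X : Matrix m n R) : (Ψ * X)ᵀ * X + Xᵀ * (Ψ * X) = 0 := by
  rw [transpose_mul, hΨ, Matrix.mul_neg, Matrix.neg_mul, Matrix.mul_assoc, neg_add_cancel]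

theorem transpose_sub_mul_transpose_eq_neg [Fintype n] (G X : Matrix m n R) :
    (G * Xᵀ - X * Gᵀ)ᵀ = -(G * Xᵀ - X * Gᵀ) := by
  simp [transpose_sub, transpose_mul]

theorem transpose_gram_sub_one [Fintype m] [DecidableEq n] (X : Matrix m n R) :
    (Xᵀ * X - 1)ᵀ = Xᵀ * X - 1 := by
  simp [transpose_sub, transpose_mul]

theorem landing_gram_velocity [Fintype m] [Fintype n] [DecidableEq n] {Ψ : Matrix m m R}
    (hΨ : Ψᵀ = -Ψ) (lam : R) (X : Matrix m n R) :
    (-(Ψ * X) - lam • (X * (Xᵀ * X - 1)))ᵀ * X + Xᵀ * (-(Ψ * X) - lam • (X * (Xᵀ * X - 1)))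
      = -lam • ((Xᵀ * X - 1) * (Xᵀ * X) + (Xᵀ * X) * (Xᵀ * X - 1)) := by
  set E := Xᵀ * X - 1
  calc _ = -((Ψ * X)ᵀ * X + Xᵀ * (Ψ * X)) - lam • ((X * E)ᵀ * X + Xᵀ * (X * E)) := by
        simp only [transpose_sub, transpose_neg, transpose_smul, Matrix.sub_mul, Matrix.mul_sub,
          Matrix.neg_mul, Matrix.mul_neg, Matrix.smul_mul, Matrix.mul_smul, smul_add]
        abel
    _ = _ := by
        rw [transpose_mul_add_transpose_mul_of_transpose_eq_neg hΨ, transpose_mul,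
          transpose_gram_sub_one, Matrix.mul_assoc, ← Matrix.mul_assoc Xᵀ, neg_zero, zero_sub,
          neg_smul]

theorem trace_mul_anticommutator_eq_two_mul_trace [Fintype n] (E S : Matrix n n R) :
    (E * (E * S + S * E)).trace = 2 * (E * S * E).trace := by
  rw [Matrix.mul_add, trace_add, trace_mul_comm E (E * S), ← Matrix.mul_assoc E S E, two_mul]

theorem frobenius_norm_sq_eq_trace [Fintype m] [Fintype n] (A : Matrix m n ℝ) :
    ‖A‖ ^ 2 = (Aᵀ * A).trace := by
  rw [frobenius_norm_def, ← Real.rpow_natCast, ← Real.rpow_mul (by positivity), trace,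
    Finset.sum_comm]
  norm_num [diag, mul_apply, sq]

end Matrix

section MatrixCalculus

variable {l m n : Type*} [Fintype l] [Fintype m] [Fintype n] {t : ℝ}

theorem HasDerivAt.matrix_mul {X : ℝ → Matrix l m ℝ} {Y : ℝ → Matrix m n ℝ}
    {X' : Matrix l m ℝ} {Y' : Matrix m n ℝ} (hX : HasDerivAt X X' t) (hY : HasDerivAt Y Y' t) :
    HasDerivAt (fun s => X s * Y s) (X' * Y t + X t * Y') t := by
  exact ((mulLinearMap ℝ).toContinuousBilinearMap.hasDerivAt_of_bilinear (fun _ => hX)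
    (fun _ => hY)).congr_deriv (add_comm _ _)

theorem HasDerivAt.matrix_transpose {X : ℝ → Matrix m n ℝ} {X' : Matrix m n ℝ}
    (hX : HasDerivAt X X' t) : HasDerivAt (fun s => (X s)ᵀ) X'ᵀ t :=
  (transposeLinearEquiv m n ℝ ℝ).toLinearMap.toContinuousLinearMap.hasFDerivAt.comp_hasDerivAt t hX

theorem HasDerivAt.matrix_trace {X : ℝ → Matrix n n ℝ} {X' : Matrix n n ℝ}
    (hX : HasDerivAt X X' t) : HasDerivAt (fun s => (X s).trace) X'.trace t :=
  (traceLinearMap n ℝ ℝ).toContinuousLinearMap.hasFDerivAt.comp_hasDerivAt t hX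

theorem HasDerivAt.trace_transpose_mul_self {E : ℝ → Matrix m n ℝ} {E' : Matrix m n ℝ}
    (hE : HasDerivAt E E' t) :
    HasDerivAt (fun s => ((E s)ᵀ * E s).trace) (2 * ((E t)ᵀ * E').trace) t := by
  refine (hE.matrix_transpose.matrix_mul hE).matrix_trace.congr_deriv ?_
  rw [trace_add, ← trace_transpose (E'ᵀ * E t), transpose_mul, transpose_transpose, two_mul]

theorem HasDerivAt.gram_sub_one [DecidableEq n] {X : ℝ → Matrix m n ℝ} {X' : Matrix m n ℝ}
    (hX : HasDerivAt X X' t) :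
    HasDerivAt (fun s => (X s)ᵀ * X s - 1) (X'ᵀ * X t + (X t)ᵀ * X') t :=
  (hX.matrix_transpose.matrix_mul hX).sub_const 1

end MatrixCalculus

theorem N_nonincreasing_along_landing_flow_general (n p : ℕ) (T lam : ℝ) (hlam : 0 < lam)
    (G : Matrix (Fin n) (Fin p) ℝ → Matrix (Fin n) (Fin p) ℝ)
    (X : ℝ → Matrix (Fin n) (Fin p) ℝ)
    (hX : ∀ t ∈ Set.Ico (0 : ℝ) T,
      HasDerivAt X
        (-((G (X t) * (X t)ᵀ - X t * (G (X t))ᵀ) * X t)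
          - lam • (X t * ((X t)ᵀ * X t - 1))) t) :
    ∀ t ∈ Set.Ico (0 : ℝ) T,
      HasDerivAt (fun s => (1/4 : ℝ) * (((X s)ᵀ * X s - 1)ᵀ * ((X s)ᵀ * X s - 1)).trace)
        (-lam * ‖X t * ((X t)ᵀ * X t - 1)‖ ^ 2) t ∧
      -lam * ‖X t * ((X t)ᵀ * X t - 1)‖ ^ 2 ≤ 0 := by
  intro t ht
  have hgram := (hX t ht).gram_sub_one
  rw [landing_gram_velocity (transpose_sub_mul_transpose_eq_neg (G (X t)) (X t))] at hgram
  refine ⟨(hgram.trace_transpose_mul_self.const_mul (1/4)).congr_deriv ?_,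
    mul_nonpos_of_nonpos_of_nonneg (neg_nonpos.2 hlam.le) (sq_nonneg _)⟩
  set E := (X t)ᵀ * X t - 1
  have hE : Eᵀ = E := transpose_gram_sub_one (X t)
  calc (1/4 : ℝ) * (2 * (Eᵀ * (-lam • (E * ((X t)ᵀ * X t) + ((X t)ᵀ * X t) * E))).trace)
      = -lam * (E * ((X t)ᵀ * X t) * E).trace := by
        rw [hE, Matrix.mul_smul, trace_smul, trace_mul_anticommutator_eq_two_mul_trace,
          smul_eq_mul]
        ring
    _ = -lam * ‖X t * E‖ ^ 2 := by
        rw [frobenius_norm_sq_eq_trace, transpose_mul, hE, Matrix.mul_assoc, Matrix.mul_assoc,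
          Matrix.mul_assoc]

/-- Along a solution of the landing system
`Ẋ(t) = −ψ(X(t))X(t) − λ X(t)(X(t)ᵀX(t) − I)` on `[0,T)` with `λ > 0`
(where `ψ(X) = ∇f(X)Xᵀ − X∇f(X)ᵀ` for a continuously differentiable `f` with
Euclidean gradient `G`), the function `N(X(t)) = (1/4)‖X(t)ᵀX(t) − I‖_F²` has
derivative `−λ‖X(t)(X(t)ᵀX(t) − I)‖_F² ≤ 0`. -/
theorem N_nonincreasing_along_landing_flow (n p : ℕ) (T lam : ℝ) (hlam : 0 < lam)
    (f : Matrix (Fin n) (Fin p) ℝ → ℝ) (hf : ContDiff ℝ 1 f)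
    (G : Matrix (Fin n) (Fin p) ℝ → Matrix (Fin n) (Fin p) ℝ)
    (hG : ∀ Y ξ : Matrix (Fin n) (Fin p) ℝ, fderiv ℝ f Y ξ = ((G Y)ᵀ * ξ).trace)
    (X : ℝ → Matrix (Fin n) (Fin p) ℝ)
    (hX : ∀ t ∈ Set.Ico (0 : ℝ) T,
      HasDerivAt X
        (-((G (X t) * (X t)ᵀ - X t * (G (X t))ᵀ) * X t)
          - lam • (X t * ((X t)ᵀ * X t - 1))) t) :
    ∀ t ∈ Set.Ico (0 : ℝ) T,
      HasDerivAt (fun s => (1/4 : ℝ) * (((X s)ᵀ * X s - 1)ᵀ * ((X s)ᵀ * X s - 1)).trace)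
        (-lam * ‖X t * ((X t)ᵀ * X t - 1)‖ ^ 2) t ∧
      -lam * ‖X t * ((X t)ᵀ * X t - 1)‖ ^ 2 ≤ 0 :=
  N_nonincreasing_along_landing_flow_general n p T lam hlam G X hX
end

section
/- Let A: [0,∞) → R^{p×p} be symmetric-matrix-valued and solve Ȧ(t) = −2λA(t)(A(t) − I_p) with A(0) symmetric positive definite and λ > 0. Then A(t) is symmetric positive definite for all t ≥ 0 and A(t) → I_p as t → ∞. -/
/-!
Diagonalise `A 0 = U diag(μ) Uᵀ` with `U` orthogonal and `μ > 0`. Since the vector field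
`X ↦ -2λ X (X - 1)` is a polynomial, the algebra homomorphism `d ↦ U diag(d) Uᵀ` carries solutions
of the ODE on the diagonal algebra `Fin p → ℝ` to solutions on matrices, and coordinatewise that
ODE is the scalar logistic equation, with explicit solution
`c(t) = μ / (μ + (1 - μ) e^{-2λt})`. This gives a solution starting at `A 0`, which is positive
definite for all `t ≥ 0` and tends to `U Uᵀ = 1`; as the vector field is locally Lipschitz, it is
the only solution, so it equals `A` on `[0, ∞)`.
-/

open Matrix Filter Set Topology

attribute [local instance] Matrix.frobeniusNormedAddCommGroup Matrix.frobeniusNormedSpace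

/-- The solution of `ċ = -2λ c (c - 1)` with `c 0 = c₀`. -/
noncomputable def logistic (lam c₀ t : ℝ) : ℝ :=
  c₀ / (c₀ + (1 - c₀) * Real.exp (-(2 * lam) * t))

section Logistic

variable {lam c₀ t : ℝ}

@[simp] theorem logistic_zero : logistic lam c₀ 0 = c₀ := by simp [logistic]

theorem logistic_denom_pos (hc₀ : 0 < c₀) (hlt : 0 ≤ lam * t) :
    0 < c₀ + (1 - c₀) * Real.exp (-(2 * lam) * t) := by
  have he : Real.exp (-(2 * lam) * t) ≤ 1 := Real.exp_le_one_iff.2 (by linarith)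
  nlinarith [Real.exp_pos (-(2 * lam) * t)]

theorem logistic_pos (hc₀ : 0 < c₀) (hlt : 0 ≤ lam * t) : 0 < logistic lam c₀ t :=
  div_pos hc₀ (logistic_denom_pos hc₀ hlt)

theorem hasDerivAt_logistic (h : c₀ + (1 - c₀) * Real.exp (-(2 * lam) * t) ≠ 0) :
    HasDerivAt (logistic lam c₀)
      (-(2 * lam) * (logistic lam c₀ t * (logistic lam c₀ t - 1))) t := by
  have hexp := ((hasDerivAt_id' t).const_mul (-(2 * lam))).exp
  refine ((hasDerivAt_const t c₀).div ((hexp.const_mul (1 - c₀)).const_add c₀) h).congr_deriv ?_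
  simp only [logistic]
  generalize Real.exp (-(2 * lam) * t) = s at h ⊢
  field_simp
  ring

theorem tendsto_logistic_atTop (hlam : 0 < lam) (hc₀ : c₀ ≠ 0) :
    Tendsto (logistic lam c₀) atTop (𝓝 1) := by
  have hexp : Tendsto (fun t => Real.exp (-(2 * lam) * t)) atTop (𝓝 0) :=
    Real.tendsto_exp_atBot.comp (tendsto_id.const_mul_atTop_of_neg (by linarith))
  have hden : Tendsto (fun t => c₀ + (1 - c₀) * Real.exp (-(2 * lam) * t)) atTop (𝓝 c₀) := by
    simpa using (hexp.const_mul (1 - c₀)).const_add c₀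
  rw [← div_self hc₀]
  exact tendsto_const_nhds.div hden hc₀

end Logistic

theorem ODE_solution_unique_Ici_of_locallyLipschitz {E : Type*} [NormedAddCommGroup E]
    [NormedSpace ℝ E] {v : E → E} (hv : LocallyLipschitz v) {f g : ℝ → E} {a : ℝ}
    (hf : ∀ t ∈ Ici a, HasDerivAt f (v (f t)) t) (hg : ∀ t ∈ Ici a, HasDerivAt g (v (g t)) t)
    (ha : f a = g a) : EqOn f g (Ici a) := by
  intro T hT
  have hsub : Icc a T ⊆ Ici a := Icc_subset_Ici_self
  have hfc : ContinuousOn f (Icc a T) := fun t ht =>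
    (hf t (hsub ht)).continuousAt.continuousWithinAt
  have hgc : ContinuousOn g (Icc a T) := fun t ht =>
    (hg t (hsub ht)).continuousAt.continuousWithinAt
  -- both trajectories stay in the compact set `K`, on which `v` is Lipschitz
  set K := f '' Icc a T ∪ g '' Icc a T
  obtain ⟨L, hL⟩ := hv.locallyLipschitzOn.exists_lipschitzOnWith_of_compact
    ((isCompact_Icc.image_of_continuousOn hfc).union (isCompact_Icc.image_of_continuousOn hgc))
  exact ODE_solution_unique_of_mem_Icc_right (s := fun _ => K) (fun _ _ => hL) hfc
    (fun t ht => (hf t (hsub (Ico_subset_Icc_self ht))).hasDerivWithinAt)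
    (fun t ht => Or.inl ⟨t, Ico_subset_Icc_self ht, rfl⟩) hgc
    (fun t ht => (hg t (hsub (Ico_subset_Icc_self ht))).hasDerivWithinAt)
    (fun t ht => Or.inr ⟨t, Ico_subset_Icc_self ht, rfl⟩) ha ⟨hT, le_rfl⟩

theorem locallyLipschitz_smul_mul_sub_one {R : Type*} [NormedRing R] [NormedAlgebra ℝ R]
    (a : ℝ) : LocallyLipschitz fun X : R => a • (X * (X - 1)) :=
  ContDiff.locallyLipschitz (𝕂 := ℝ) (by fun_prop)

theorem LinearMap.hasDerivAt_comp_of_finiteDimensional {E F : Type*} [NormedAddCommGroup E]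
    [NormedSpace ℝ E] [FiniteDimensional ℝ E] [NormedAddCommGroup F] [NormedSpace ℝ F]
    (φ : E →ₗ[ℝ] F) {c : ℝ → E} {c' : E} {t : ℝ} (hc : HasDerivAt c c' t) :
    HasDerivAt (φ ∘ c) (φ c') t :=
  (LinearMap.toContinuousLinearMap φ).hasFDerivAt.comp_hasDerivAt t hc

theorem matrix_logistic_ode_general (p : ℕ) (lam : ℝ) (hlam : 0 < lam)
    (A : ℝ → Matrix (Fin p) (Fin p) ℝ)
    (hode : ∀ t ∈ Set.Ici (0 : ℝ),
      HasDerivAt A (-(2 * lam) • (A t * (A t - 1))) t)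
    (h0 : (A 0).PosDef) :
    (∀ t ∈ Set.Ici (0 : ℝ), (A t).PosDef) ∧
    Tendsto A atTop (nhds (1 : Matrix (Fin p) (Fin p) ℝ)) := by
  set U := h0.1.eigenvectorUnitary
  set μ := h0.1.eigenvalues
  let φ : (Fin p → ℝ) →ₐ[ℝ] Matrix (Fin p) (Fin p) ℝ :=
    (Unitary.conjStarAlgAut ℝ _ U : Matrix (Fin p) (Fin p) ℝ →ₐ[ℝ] Matrix (Fin p) (Fin p) ℝ).comp
      (diagonalAlgHom ℝ)
  let c : ℝ → Fin p → ℝ := fun t i => logistic lam (μ i) t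
  have hc : ∀ t ∈ Ici (0 : ℝ), HasDerivAt c (-(2 * lam) • (c t * (c t - 1))) t := fun t ht =>
    hasDerivAt_pi.2 fun i => by
      simpa using hasDerivAt_logistic
        (logistic_denom_pos (h0.eigenvalues_pos i) (mul_nonneg hlam.le ht)).ne'
  have hc0 : φ (c 0) = A 0 := by simpa [φ, c] using h0.1.spectral_theorem.symm
  -- the Frobenius norm is submultiplicative, so it makes the matrices a normed algebra
  have hAB : EqOn A (φ ∘ c) (Ici 0) :=
    ODE_solution_unique_Ici_of_locallyLipschitz
      (@locallyLipschitz_smul_mul_sub_one _ frobeniusNormedRing frobeniusNormedAlgebra _) hode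
      (fun t ht => by simpa using φ.toLinearMap.hasDerivAt_comp_of_finiteDimensional (hc t ht))
      hc0.symm
  refine ⟨fun t ht => ?_, ?_⟩
  · rw [hAB ht]
    exact Unitary.isUnit_coe.posDef_star_right_conjugate_iff.2 <|
      PosDef.diagonal fun i => logistic_pos (h0.eigenvalues_pos i) (mul_nonneg hlam.le ht)
  · have hc_lim : Tendsto c atTop (𝓝 1) :=
      tendsto_pi_nhds.2 fun i => tendsto_logistic_atTop hlam (h0.eigenvalues_pos i).ne'
    have hφ := (φ.toLinearMap.continuous_of_finiteDimensional.tendsto 1).comp hc_lim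
    rw [AlgHom.toLinearMap_apply, map_one] at hφ
    exact hφ.congr' (eventuallyEq_of_mem (Ici_mem_atTop 0) hAB).symm

/-- If `A(t)` is symmetric-matrix-valued, solves `Ȧ = −2λA(A − I)` with `λ > 0`,
and `A(0)` is symmetric positive definite, then `A(t)` remains symmetric positive
definite for all `t ≥ 0` and `A(t) → I` as `t → ∞`. -/
theorem matrix_logistic_ode (p : ℕ) (lam : ℝ) (hlam : 0 < lam)
    (A : ℝ → Matrix (Fin p) (Fin p) ℝ)
    (hsym : ∀ t ∈ Set.Ici (0 : ℝ), (A t)ᵀ = A t)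
    (hode : ∀ t ∈ Set.Ici (0 : ℝ),
      HasDerivAt A (-(2 * lam) • (A t * (A t - 1))) t)
    (h0 : (A 0).PosDef) :
    (∀ t ∈ Set.Ici (0 : ℝ), (A t).PosDef) ∧
    Tendsto A atTop (nhds (1 : Matrix (Fin p) (Fin p) ℝ)) :=
  matrix_logistic_ode_general p lam hlam A hode h0
end

section
/- Let X ∈ R^{n×p} have full column rank. Then Λ(X) = 0 if and only if XᵀX = I_p and ψ(X)X = 0, where Λ(X) = ψ(X)X + λX(XᵀX − I_p) with λ > 0. -/
/-!
Write `Λ(X) = A + B` with `A = ψ(X)X` and `B = λX(XᵀX − I)`. Since `ψ(X)` is skew-symmetric and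
`XᵀX − I` is symmetric, `A` and `B` are orthogonal for the Frobenius inner product
`⟨A, B⟩ = tr(AᵀB)`. Hence `A + B = 0` forces `‖A‖² = −⟨A, B⟩ = 0`, so `A = 0` and then `B = 0`;
and `X(XᵀX − I) = 0` gives `XᵀX = I` after cancelling the invertible Gram matrix `XᵀX`.
-/

open Matrix

attribute [local instance] Matrix.frobeniusNormedAddCommGroup Matrix.frobeniusNormedSpace

namespace Matrix

variable {m n p R : Type*} [Fintype m] [Fintype n] [Fintype p]

theorem trace_transpose_mul_self_eq_zero_iff [CommRing R] [LinearOrder R] [IsStrictOrderedRing R]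
    {A : Matrix m n R} : (Aᵀ * A).trace = 0 ↔ A = 0 := by
  refine ⟨fun h => ?_, fun h => by simp [h]⟩
  simp only [trace, diag, mul_apply, transpose_apply] at h
  rw [Fintype.sum_eq_zero_iff_of_nonneg fun j => Fintype.sum_nonneg fun i => mul_self_nonneg _]
    at h
  ext i j
  have hj := (Fintype.sum_eq_zero_iff_of_nonneg fun i => mul_self_nonneg (A i j)).1 (congrFun h j)
  simpa using congrFun hj i

theorem trace_mul_eq_zero_of_transpose_eq_neg_of_transpose_eq [CommRing R] [NoZeroDivisors R]
    [CharZero R] {K S : Matrix n n R} (hK : Kᵀ = -K) (hS : Sᵀ = S) : (K * S).trace = 0 := by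
  have h : (K * S).trace = -(K * S).trace := by
    conv_lhs => rw [← trace_transpose, transpose_mul, hK, hS, trace_mul_comm]
    rw [neg_mul, trace_neg]
  exact self_eq_neg.1 h

theorem trace_transpose_mul_eq_zero_of_transpose_eq_neg_of_transpose_eq [CommRing R]
    [NoZeroDivisors R] [CharZero R] {ψ : Matrix n n R} (hψ : ψᵀ = -ψ) (X : Matrix n p R)
    {S : Matrix p p R} (hS : Sᵀ = S) : ((ψ * X)ᵀ * (X * S)).trace = 0 := by
  have hK : (Xᵀ * ψᵀ * X)ᵀ = -(Xᵀ * ψᵀ * X) := by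
    simp [transpose_mul, hψ, Matrix.mul_assoc]
  rw [transpose_mul, ← Matrix.mul_assoc]
  exact trace_mul_eq_zero_of_transpose_eq_neg_of_transpose_eq hK hS

theorem eq_zero_of_add_eq_zero_of_trace_transpose_mul_eq_zero [CommRing R] [LinearOrder R]
    [IsStrictOrderedRing R] {A B : Matrix m n R} (hAB : A + B = 0) (h : (Aᵀ * B).trace = 0) :
    A = 0 := by
  rw [eq_neg_of_add_eq_zero_right hAB, Matrix.mul_neg, trace_neg, neg_eq_zero] at h
  exact trace_transpose_mul_self_eq_zero_iff.1 h

end Matrix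

theorem landing_field_zero_iff_general (n p : ℕ) (lam : ℝ) (hlam : 0 < lam)
    (X G : Matrix (Fin n) (Fin p) ℝ) (hX : IsUnit (Xᵀ * X)) :
    (G * Xᵀ - X * Gᵀ) * X + lam • (X * (Xᵀ * X - 1)) = 0 ↔
      Xᵀ * X = 1 ∧ (G * Xᵀ - X * Gᵀ) * X = 0 := by
  set ψ := G * Xᵀ - X * Gᵀ
  have hψ : ψᵀ = -ψ := by simp [ψ, transpose_mul]
  constructor
  · intro h
    have horth : ((ψ * X)ᵀ * (lam • (X * (Xᵀ * X - 1)))).trace = 0 := by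
      rw [← Matrix.mul_smul]
      exact trace_transpose_mul_eq_zero_of_transpose_eq_neg_of_transpose_eq hψ X
        (by simp [transpose_mul])
    have hψX := eq_zero_of_add_eq_zero_of_trace_transpose_mul_eq_zero h horth
    have hB : X * (Xᵀ * X - 1) = 0 := by simpa [hψX, hlam.ne'] using h
    have hGram : Xᵀ * X - 1 = 0 :=
      hX.mul_right_eq_zero.1 (by rw [Matrix.mul_assoc, hB, Matrix.mul_zero])
    exact ⟨sub_eq_zero.1 hGram, hψX⟩
  · rintro ⟨hXX, hψX⟩
    simp [hXX, hψX]

/-- For `X` of full column rank, the landing field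
`Λ(X) = ψ(X)X + λX(XᵀX − I)` (with `λ > 0`) vanishes if and only if
`XᵀX = I` and `ψ(X)X = 0`. -/
theorem landing_field_zero_iff (n p : ℕ) (lam : ℝ) (hlam : 0 < lam)
    (f : Matrix (Fin n) (Fin p) ℝ → ℝ) (hf : Differentiable ℝ f)
    (X G : Matrix (Fin n) (Fin p) ℝ) (hX : IsUnit (Xᵀ * X))
    (hG : ∀ ξ : Matrix (Fin n) (Fin p) ℝ, fderiv ℝ f X ξ = (Gᵀ * ξ).trace) :
    (G * Xᵀ - X * Gᵀ) * X + lam • (X * (Xᵀ * X - 1)) = 0 ↔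
      Xᵀ * X = 1 ∧ (G * Xᵀ - X * Gᵀ) * X = 0 :=
  landing_field_zero_iff_general n p lam hlam X G hX
end

section
/- Let X ∈ R^{n×p} have full column rank, and define Π_X(ξ) = ξXᵀX + XXᵀξ on the tangent space T_X = {ξ : ξᵀX + Xᵀξ = 0}. Then Π_X maps T_X into T_X and is a linear bijection of T_X onto itself. -/
/-!
If `Π_X ξ = 0`, then `Ω = Xᵀξ` solves the Lyapunov equation `Ω XᵀX + XᵀX Ω = 0`; pairing it
with `Ω` in the trace inner product gives `‖XΩᵀ‖² + ‖XΩ‖² = 0`, so `XXᵀξ = 0`, hence `ξXᵀX = 0` and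
`ξ = 0`. Thus `Π_X` is injective on all matrices. The defect `ξᵀX + Xᵀξ` transforms under `Π_X`
by the same Lyapunov operator, so `T_X` is invariant, and an injective endomorphism is onto a
finite-dimensional invariant subspace.
-/

open Matrix

section

variable {m n : Type*} [Fintype m] (X : Matrix m n ℝ)

def stiefelTangentSpace : Submodule ℝ (Matrix m n ℝ) :=
  LinearMap.ker (mulRightLinearMap n ℝ X ∘ₗ (transposeLinearEquiv m n ℝ ℝ).toLinearMap +
    mulLeftLinearMap n ℝ Xᵀ)

theorem mem_stiefelTangentSpace {ξ : Matrix m n ℝ} :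
    ξ ∈ stiefelTangentSpace X ↔ ξᵀ * X + Xᵀ * ξ = 0 := Iff.rfl

variable [Fintype n]

theorem mul_eq_zero_of_mul_gram_add_gram_mul_eq_zero
    {Ω : Matrix n n ℝ} (h : Ω * (Xᵀ * X) + (Xᵀ * X) * Ω = 0) : X * Ω = 0 := by
  have hsum : ((X * Ωᵀ)ᵀ * (X * Ωᵀ)).trace + ((X * Ω)ᵀ * (X * Ω)).trace = 0 := by
    calc _ = (Ωᵀ * (Ω * (Xᵀ * X))).trace + (Ωᵀ * ((Xᵀ * X) * Ω)).trace := by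
          rw [trace_mul_comm Ωᵀ]
          simp only [transpose_mul, transpose_transpose, Matrix.mul_assoc]
      _ = (Ωᵀ * (Ω * (Xᵀ * X) + (Xᵀ * X) * Ω)).trace := by rw [Matrix.mul_add, trace_add]
      _ = 0 := by rw [h, Matrix.mul_zero, trace_zero]
  have hnonneg (M : Matrix m n ℝ) : 0 ≤ (Mᵀ * M).trace := by
    simpa using (posSemidef_conjTranspose_mul_self M).trace_nonneg
  have hzero : ((X * Ω)ᵀ * (X * Ω)).trace = 0 := by
    linarith [hnonneg (X * Ωᵀ), hnonneg (X * Ω)]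
  simpa using trace_conjTranspose_mul_self_eq_zero_iff.mp
    (by simpa only [conjTranspose_eq_transpose_of_trivial] using hzero)

def piX : Matrix m n ℝ →ₗ[ℝ] Matrix m n ℝ :=
  mulRightLinearMap m ℝ (Xᵀ * X) + mulLeftLinearMap n ℝ (X * Xᵀ)

theorem piX_apply (ξ : Matrix m n ℝ) : piX X ξ = ξ * (Xᵀ * X) + X * Xᵀ * ξ := rfl

theorem transpose_mul_piX (ξ : Matrix m n ℝ) :
    Xᵀ * piX X ξ = (Xᵀ * ξ) * (Xᵀ * X) + (Xᵀ * X) * (Xᵀ * ξ) := by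
  simp only [piX_apply, Matrix.mul_add, Matrix.mul_assoc]

theorem transpose_piX_mul_add_transpose_mul_piX (ξ : Matrix m n ℝ) :
    (piX X ξ)ᵀ * X + Xᵀ * piX X ξ =
      (ξᵀ * X + Xᵀ * ξ) * (Xᵀ * X) + (Xᵀ * X) * (ξᵀ * X + Xᵀ * ξ) := by
  simp only [piX_apply, transpose_add, transpose_mul, transpose_transpose, Matrix.add_mul,
    Matrix.mul_add, Matrix.mul_assoc]
  abel

theorem piX_mapsTo_stiefelTangentSpace :
    Set.MapsTo (piX X) (stiefelTangentSpace X) (stiefelTangentSpace X) := fun ξ hξ => by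
  rw [SetLike.mem_coe, mem_stiefelTangentSpace] at hξ ⊢
  rw [transpose_piX_mul_add_transpose_mul_piX, hξ, Matrix.zero_mul, Matrix.mul_zero, add_zero]

theorem piX_injective [DecidableEq n] (hX : IsUnit (Xᵀ * X)) : Function.Injective (piX X) := by
  refine (injective_iff_map_eq_zero _).mpr fun ξ hξ => ?_
  have hXXξ : X * (Xᵀ * ξ) = 0 :=
    mul_eq_zero_of_mul_gram_add_gram_mul_eq_zero X <| by
      rw [← transpose_mul_piX, hξ, Matrix.mul_zero]
  have hξA : ξ * (Xᵀ * X) = 0 := by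
    rwa [piX_apply, Matrix.mul_assoc, hXXξ, add_zero] at hξ
  refine mul_left_injective_of_inv _ _ (mul_nonsing_inv _ ((isUnit_iff_isUnit_det _).mp hX)) ?_
  simpa only [Matrix.zero_mul] using hξA

end

/-- For `X` of full column rank, the linear map `Π_X(ξ) = ξXᵀX + XXᵀξ` maps the
tangent space `T_X = {ξ : ξᵀX + Xᵀξ = 0}` into itself and is a bijection of
`T_X` onto itself. -/
theorem Pi_X_bijective_on_tangent (n p : ℕ) (X : Matrix (Fin n) (Fin p) ℝ)
    (hX : IsUnit (Xᵀ * X)) :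
    (∀ ξ ∈ {ξ : Matrix (Fin n) (Fin p) ℝ | ξᵀ * X + Xᵀ * ξ = 0},
      ξ * (Xᵀ * X) + X * Xᵀ * ξ ∈
        {ξ : Matrix (Fin n) (Fin p) ℝ | ξᵀ * X + Xᵀ * ξ = 0}) ∧
    Set.BijOn (fun ξ : Matrix (Fin n) (Fin p) ℝ => ξ * (Xᵀ * X) + X * Xᵀ * ξ)
      {ξ : Matrix (Fin n) (Fin p) ℝ | ξᵀ * X + Xᵀ * ξ = 0}
      {ξ : Matrix (Fin n) (Fin p) ℝ | ξᵀ * X + Xᵀ * ξ = 0} := by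
  have hmaps := piX_mapsTo_stiefelTangentSpace X
  have hinj : Set.InjOn (piX X) (stiefelTangentSpace X) := (piX_injective X hX).injOn
  exact ⟨hmaps, hmaps, hinj, (LinearMap.injOn_iff_surjOn hmaps).mp hinj⟩
end
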